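/- arXiv:2105.10811 — 10 statements merged into one kernel-verified Lean document; each statement's English description precedes it below -/
import Mathlib

section
/- Let R be a commutative ring, let f, g ∈ R, let (φ, ψ) be an n×n matrix factorization of f and (φ′, ψ′) an m×m matrix factorization of g. Then Yoshino's tensor product X ⊗̂ X′, given by the pair of 2nm×2nm block matrices ( [φ⊗Iₘ, Iₙ⊗φ′; −Iₙ⊗ψ′, ψ⊗Iₘ], [ψ⊗Iₘ, −Iₙ⊗φ′; Iₙ⊗ψ′, φ⊗Iₘ] ), is a matrix factorization of f + g of size 2nm; that is, the product of the two block matrices in either order equals (f+g)·I_{2nm}. -/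
open Matrix Kronecker

/-- `(φ, ψ)` is a matrix factorization of `f`: `φψ = ψφ = f·1`. -/
def IsMatrixFactorization {R : Type*} [CommRing R] {ι : Type*} [Fintype ι] [DecidableEq ι]
    (f : R) (φ ψ : Matrix ι ι R) : Prop :=
  φ * ψ = f • (1 : Matrix ι ι R) ∧ ψ * φ = f • (1 : Matrix ι ι R)

/-- Yoshino's tensor product `X ⊗̂ X′` of a matrix factorization of `f` and one of `g`
is a matrix factorization of `f + g` of size `2nm`. -/
theorem yoshino_tensor_product {R : Type*} [CommRing R] {n m : ℕ} (f g : R)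
    (φ ψ : Matrix (Fin n) (Fin n) R) (φ' ψ' : Matrix (Fin m) (Fin m) R)
    (hX : IsMatrixFactorization f φ ψ) (hX' : IsMatrixFactorization g φ' ψ') :
    IsMatrixFactorization (f + g)
      (fromBlocks (φ ⊗ₖ (1 : Matrix (Fin m) (Fin m) R))
        ((1 : Matrix (Fin n) (Fin n) R) ⊗ₖ φ')
        (-((1 : Matrix (Fin n) (Fin n) R) ⊗ₖ ψ'))
        (ψ ⊗ₖ (1 : Matrix (Fin m) (Fin m) R)))
      (fromBlocks (ψ ⊗ₖ (1 : Matrix (Fin m) (Fin m) R))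
        (-((1 : Matrix (Fin n) (Fin n) R) ⊗ₖ φ'))
        ((1 : Matrix (Fin n) (Fin n) R) ⊗ₖ ψ')
        (φ ⊗ₖ (1 : Matrix (Fin m) (Fin m) R))) := by
  obtain ⟨h1, h2⟩ := hX
  obtain ⟨h3, h4⟩ := hX'
  constructor <;>
  · rw [fromBlocks_multiply]
    simp only [mul_neg, neg_mul, neg_neg, ← mul_kronecker_mul, h1, h2, h3, h4,
      Matrix.mul_one, Matrix.one_mul, smul_kronecker, kronecker_smul, one_kronecker_one,
      Matrix.fromBlocks_smul]
    rw [← fromBlocks_one, fromBlocks_smul]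
    simp [add_smul, add_comm]
end

section
/- Let R be a commutative ring, let f, g ∈ R, let (φ, ψ) be an n×n matrix factorization of f and (φ′, ψ′) an m×m matrix factorization of g. Then the first variant of Yoshino's tensor product X ⊗̂′ X′, given by the pair of 2nm×2nm block matrices ( [Iₙ⊗φ′, ψ⊗Iₘ; φ⊗Iₘ, −Iₙ⊗ψ′], [Iₙ⊗ψ′, ψ⊗Iₘ; φ⊗Iₘ, −Iₙ⊗φ′] ), is a matrix factorization of f + g of size 2nm; that is, the product of the two block matrices in either order equals (f+g)·I_{2nm}. -/
open Matrix Kronecker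

/-- The first variant `X ⊗̂′ X′` of Yoshino's tensor product of a matrix factorization of `f`
and one of `g` is a matrix factorization of `f + g` of size `2nm`. -/
theorem yoshino_tensor_product_variant_one {R : Type*} [CommRing R] {n m : ℕ} (f g : R)
    (φ ψ : Matrix (Fin n) (Fin n) R) (φ' ψ' : Matrix (Fin m) (Fin m) R)
    (hX : IsMatrixFactorization f φ ψ) (hX' : IsMatrixFactorization g φ' ψ') :
    IsMatrixFactorization (f + g)
      (fromBlocks ((1 : Matrix (Fin n) (Fin n) R) ⊗ₖ φ')
        (ψ ⊗ₖ (1 : Matrix (Fin m) (Fin m) R))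
        (φ ⊗ₖ (1 : Matrix (Fin m) (Fin m) R))
        (-((1 : Matrix (Fin n) (Fin n) R) ⊗ₖ ψ')))
      (fromBlocks ((1 : Matrix (Fin n) (Fin n) R) ⊗ₖ ψ')
        (ψ ⊗ₖ (1 : Matrix (Fin m) (Fin m) R))
        (φ ⊗ₖ (1 : Matrix (Fin m) (Fin m) R))
        (-((1 : Matrix (Fin n) (Fin n) R) ⊗ₖ φ'))) := by
  obtain ⟨h1, h2⟩ := hX
  obtain ⟨h1', h2'⟩ := hX'
  constructor <;>
  · rw [fromBlocks_multiply]
    simp only [Matrix.mul_neg, Matrix.neg_mul, neg_neg, ← mul_kronecker_mul,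
      Matrix.one_mul, Matrix.mul_one, h1, h2, h1', h2',
      smul_kronecker, kronecker_smul, one_kronecker_one,
      add_neg_cancel, neg_add_cancel, add_smul]
    rw [add_comm (g • (1 : Matrix (Fin n × Fin m) (Fin n × Fin m) R)) (f • 1), ← add_smul,
      ← add_smul, ← smul_zero (f + g), ← fromBlocks_smul, fromBlocks_one]
end

section
/- Let R be a commutative ring, let f, g ∈ R, let (φ, ψ) be an n×n matrix factorization of f and (φ′, ψ′) an m×m matrix factorization of g. Then the second variant of Yoshino's tensor product X ⊗̂″ X′, given by the pair of 2nm×2nm block matrices ( [ψ⊗Iₘ, −Iₙ⊗ψ′; Iₙ⊗φ′, φ⊗Iₘ], [φ⊗Iₘ, Iₙ⊗ψ′; −Iₙ⊗φ′, ψ⊗Iₘ] ), is a matrix factorization of f + g of size 2nm; that is, the product of the two block matrices in either order equals (f+g)·I_{2nm}. -/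
open Matrix Kronecker

/-- The second variant `X ⊗̂″ X′` of Yoshino's tensor product of a matrix factorization of `f`
and one of `g` is a matrix factorization of `f + g` of size `2nm`. -/
theorem yoshino_tensor_product_variant_two {R : Type*} [CommRing R] {n m : ℕ} (f g : R)
    (φ ψ : Matrix (Fin n) (Fin n) R) (φ' ψ' : Matrix (Fin m) (Fin m) R)
    (hX : IsMatrixFactorization f φ ψ) (hX' : IsMatrixFactorization g φ' ψ') :
    IsMatrixFactorization (f + g)
      (fromBlocks (ψ ⊗ₖ (1 : Matrix (Fin m) (Fin m) R))
        (-((1 : Matrix (Fin n) (Fin n) R) ⊗ₖ ψ'))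
        ((1 : Matrix (Fin n) (Fin n) R) ⊗ₖ φ')
        (φ ⊗ₖ (1 : Matrix (Fin m) (Fin m) R)))
      (fromBlocks (φ ⊗ₖ (1 : Matrix (Fin m) (Fin m) R))
        ((1 : Matrix (Fin n) (Fin n) R) ⊗ₖ ψ')
        (-((1 : Matrix (Fin n) (Fin n) R) ⊗ₖ φ'))
        (ψ ⊗ₖ (1 : Matrix (Fin m) (Fin m) R))) := by
  obtain ⟨h1, h2⟩ := hX
  obtain ⟨h1', h2'⟩ := hX'
  constructor <;>
  · rw [fromBlocks_multiply, ← fromBlocks_one, fromBlocks_smul]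
    simp [← Matrix.mul_kronecker_mul, h1, h2, h1', h2', smul_kronecker, kronecker_smul,
      one_kronecker_one, smul_smul, add_smul, add_comm]
end

section
/- Let R be a commutative ring, let f, g ∈ R, let (φ, ψ) be an n×n matrix factorization of f and (φ′, ψ′) an m×m matrix factorization of g. Then the third variant of Yoshino's tensor product X ⊗̂‴ X′, given by the pair of 2nm×2nm block matrices ( [−Iₙ⊗ψ′, φ⊗Iₘ; ψ⊗Iₘ, Iₙ⊗φ′], [−Iₙ⊗φ′, φ⊗Iₘ; ψ⊗Iₘ, Iₙ⊗ψ′] ), is a matrix factorization of f + g of size 2nm; that is, the product of the two block matrices in either order equals (f+g)·I_{2nm}. -/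
open Matrix Kronecker

/-- The third variant `X ⊗̂‴ X′` of Yoshino's tensor product of a matrix factorization of `f`
and one of `g` is a matrix factorization of `f + g` of size `2nm`. -/
theorem yoshino_tensor_product_variant_three {R : Type*} [CommRing R] {n m : ℕ} (f g : R)
    (φ ψ : Matrix (Fin n) (Fin n) R) (φ' ψ' : Matrix (Fin m) (Fin m) R)
    (hX : IsMatrixFactorization f φ ψ) (hX' : IsMatrixFactorization g φ' ψ') :
    IsMatrixFactorization (f + g)
      (fromBlocks (-((1 : Matrix (Fin n) (Fin n) R) ⊗ₖ ψ'))
        (φ ⊗ₖ (1 : Matrix (Fin m) (Fin m) R))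
        (ψ ⊗ₖ (1 : Matrix (Fin m) (Fin m) R))
        ((1 : Matrix (Fin n) (Fin n) R) ⊗ₖ φ'))
      (fromBlocks (-((1 : Matrix (Fin n) (Fin n) R) ⊗ₖ φ'))
        (φ ⊗ₖ (1 : Matrix (Fin m) (Fin m) R))
        (ψ ⊗ₖ (1 : Matrix (Fin m) (Fin m) R))
        ((1 : Matrix (Fin n) (Fin n) R) ⊗ₖ ψ')) := by
  obtain ⟨h1, h2⟩ := hX
  obtain ⟨h3, h4⟩ := hX'
  constructor <;>
  · rw [fromBlocks_multiply, ← fromBlocks_one, Matrix.fromBlocks_smul]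
    simp [← mul_kronecker_mul, h1, h2, h3, h4, smul_kronecker, kronecker_smul, add_smul]
    abel
end

section
/- Let R be a commutative ring, f, g, h ∈ R, and let X = (φ, ψ), X′ = (φ′, ψ′), X″ = (φ″, ψ″) be matrix factorizations of f, g, h of sizes r, p, m respectively. Define X ⊗̃ Y := ( [φ_X⊗φ_Y, 0; 0, φ_X⊗φ_Y], [ψ_X⊗ψ_Y, 0; 0, ψ_X⊗ψ_Y] ). Then the multiplicative tensor product is associative: (X ⊗̃ X′) ⊗̃ X″ = X ⊗̃ (X′ ⊗̃ X″) as matrix factorizations of fgh of size 4rpm, where the two sides are identified along the canonical bijection of index sets coming from associativity of products of index types (i.e., each component matrix of one side is obtained from the corresponding component of the other by reindexing rows and columns along this canonical bijection). -/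
open Matrix Kronecker

/-- The canonical bijection of index sets coming from associativity of products of index
types, identifying the index set of `(X ⊗̃ X′) ⊗̃ X″` with that of `X ⊗̃ (X′ ⊗̃ X″)`. -/
def assocIndexEquiv (A B C : Type*) :
    ((((A × B) ⊕ (A × B)) × C) ⊕ (((A × B) ⊕ (A × B)) × C)) ≃
      ((A × ((B × C) ⊕ (B × C))) ⊕ (A × ((B × C) ⊕ (B × C)))) :=
  Equiv.sumCongr
    ((Equiv.sumProdDistrib (A × B) (A × B) C).trans
      ((Equiv.sumCongr (Equiv.prodAssoc A B C) (Equiv.prodAssoc A B C)).trans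
        (Equiv.prodSumDistrib A (B × C) (B × C)).symm))
    ((Equiv.sumProdDistrib (A × B) (A × B) C).trans
      ((Equiv.sumCongr (Equiv.prodAssoc A B C) (Equiv.prodAssoc A B C)).trans
        (Equiv.prodSumDistrib A (B × C) (B × C)).symm))


lemma kron_fac {R : Type*} [CommRing R] {ι κ : Type*} [Fintype ι] [DecidableEq ι]
    [Fintype κ] [DecidableEq κ] {f g : R} {A B : Matrix ι ι R} {C D : Matrix κ κ R}
    (hAB : A * B = f • (1 : Matrix ι ι R)) (hCD : C * D = g • (1 : Matrix κ κ R)) :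
    (A ⊗ₖ C) * (B ⊗ₖ D) = (f * g) • (1 : Matrix (ι × κ) (ι × κ) R) := by
  rw [← Matrix.mul_kronecker_mul, hAB, hCD, Matrix.smul_kronecker, Matrix.kronecker_smul,
    Matrix.one_kronecker_one, smul_smul]

lemma block_fac {R : Type*} [CommRing R] {ι : Type*} [Fintype ι] [DecidableEq ι] {f : R}
    {A B : Matrix ι ι R} (hAB : A * B = f • (1 : Matrix ι ι R)) :
    Matrix.fromBlocks A 0 0 A * Matrix.fromBlocks B 0 0 B
      = f • (1 : Matrix (ι ⊕ ι) (ι ⊕ ι) R) := by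
  rw [Matrix.fromBlocks_multiply]
  simp [hAB, ← Matrix.fromBlocks_one, Matrix.fromBlocks_smul]

/-- Associativity of the multiplicative tensor product `⊗̃`: both iterated products are
matrix factorizations of `fgh` of size `4rpm` and `(X ⊗̃ X′) ⊗̃ X″ = X ⊗̃ (X′ ⊗̃ X″)` after
reindexing along the canonical bijection of index sets. -/
theorem mult_tensor_product_assoc {R : Type*} [CommRing R] {r p m : ℕ} (f g h : R)
    (φ ψ : Matrix (Fin r) (Fin r) R) (φ' ψ' : Matrix (Fin p) (Fin p) R)
    (φ'' ψ'' : Matrix (Fin m) (Fin m) R)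
    (hX : IsMatrixFactorization f φ ψ) (hX' : IsMatrixFactorization g φ' ψ')
    (hX'' : IsMatrixFactorization h φ'' ψ'') :
    IsMatrixFactorization (f * g * h)
      (fromBlocks ((fromBlocks (φ ⊗ₖ φ') 0 0 (φ ⊗ₖ φ')) ⊗ₖ φ'') 0 0
        ((fromBlocks (φ ⊗ₖ φ') 0 0 (φ ⊗ₖ φ')) ⊗ₖ φ''))
      (fromBlocks ((fromBlocks (ψ ⊗ₖ ψ') 0 0 (ψ ⊗ₖ ψ')) ⊗ₖ ψ'') 0 0
        ((fromBlocks (ψ ⊗ₖ ψ') 0 0 (ψ ⊗ₖ ψ')) ⊗ₖ ψ'')) ∧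
    IsMatrixFactorization (f * g * h)
      (fromBlocks (φ ⊗ₖ (fromBlocks (φ' ⊗ₖ φ'') 0 0 (φ' ⊗ₖ φ''))) 0 0
        (φ ⊗ₖ (fromBlocks (φ' ⊗ₖ φ'') 0 0 (φ' ⊗ₖ φ''))))
      (fromBlocks (ψ ⊗ₖ (fromBlocks (ψ' ⊗ₖ ψ'') 0 0 (ψ' ⊗ₖ ψ''))) 0 0
        (ψ ⊗ₖ (fromBlocks (ψ' ⊗ₖ ψ'') 0 0 (ψ' ⊗ₖ ψ'')))) ∧
    (Matrix.reindex (assocIndexEquiv (Fin r) (Fin p) (Fin m))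
        (assocIndexEquiv (Fin r) (Fin p) (Fin m))
        (fromBlocks ((fromBlocks (φ ⊗ₖ φ') 0 0 (φ ⊗ₖ φ')) ⊗ₖ φ'') 0 0
          ((fromBlocks (φ ⊗ₖ φ') 0 0 (φ ⊗ₖ φ')) ⊗ₖ φ'')) =
      fromBlocks (φ ⊗ₖ (fromBlocks (φ' ⊗ₖ φ'') 0 0 (φ' ⊗ₖ φ''))) 0 0
        (φ ⊗ₖ (fromBlocks (φ' ⊗ₖ φ'') 0 0 (φ' ⊗ₖ φ'')))) ∧
    (Matrix.reindex (assocIndexEquiv (Fin r) (Fin p) (Fin m))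
        (assocIndexEquiv (Fin r) (Fin p) (Fin m))
        (fromBlocks ((fromBlocks (ψ ⊗ₖ ψ') 0 0 (ψ ⊗ₖ ψ')) ⊗ₖ ψ'') 0 0
          ((fromBlocks (ψ ⊗ₖ ψ') 0 0 (ψ ⊗ₖ ψ')) ⊗ₖ ψ'')) =
      fromBlocks (ψ ⊗ₖ (fromBlocks (ψ' ⊗ₖ ψ'') 0 0 (ψ' ⊗ₖ ψ''))) 0 0
        (ψ ⊗ₖ (fromBlocks (ψ' ⊗ₖ ψ'') 0 0 (ψ' ⊗ₖ ψ'')))) := by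
  obtain ⟨h1, h2⟩ := hX
  obtain ⟨h1', h2'⟩ := hX'
  obtain ⟨h1'', h2''⟩ := hX''
  refine ⟨⟨block_fac (kron_fac (block_fac (kron_fac h1 h1')) h1''),
      block_fac (kron_fac (block_fac (kron_fac h2 h2')) h2'')⟩,
    ⟨by simpa [mul_assoc] using
        block_fac (kron_fac h1 (block_fac (kron_fac h1' h1''))),
      by simpa [mul_assoc] using
        block_fac (kron_fac h2 (block_fac (kron_fac h2' h2'')))⟩, ?_, ?_⟩ <;>
  · ext i j
    rcases i with ⟨a,⟨b,c⟩|⟨b,c⟩⟩|⟨a,⟨b,c⟩|⟨b,c⟩⟩ <;>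
      rcases j with ⟨a',⟨b',c'⟩|⟨b',c'⟩⟩|⟨a',⟨b',c'⟩|⟨b',c'⟩⟩ <;>
      simp [assocIndexEquiv, Matrix.kroneckerMap_apply, mul_assoc]
end

section
/- Let R be a commutative ring, f, g, h ∈ R, and let X = (φ, ψ), X′ = (φ′, ψ′), X″ = (φ″, ψ″) be matrix factorizations of f, g, h of sizes r, p, m respectively. Define X ⊗̃′ Y := ( [0, φ_X⊗φ_Y; φ_X⊗φ_Y, 0], [0, ψ_X⊗ψ_Y; ψ_X⊗ψ_Y, 0] ). Then (X ⊗̃′ X′) ⊗̃′ X″ = X ⊗̃′ (X′ ⊗̃′ X″) as matrix factorizations of fgh of size 4rpm, where the two sides are identified along the canonical bijection of index sets coming from associativity of products of index types (i.e., each component matrix of one side is obtained from the corresponding component of the other by reindexing rows and columns along this canonical bijection). -/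
open Matrix Kronecker

lemma mfTensor {R : Type*} [CommRing R] {ι κ : Type*} [Fintype ι] [DecidableEq ι]
    [Fintype κ] [DecidableEq κ] {f g : R} {φ ψ : Matrix ι ι R} {A B : Matrix κ κ R}
    (h1 : IsMatrixFactorization f φ ψ) (h2 : IsMatrixFactorization g A B) :
    IsMatrixFactorization (f * g)
      (fromBlocks 0 (φ ⊗ₖ A) (φ ⊗ₖ A) 0) (fromBlocks 0 (ψ ⊗ₖ B) (ψ ⊗ₖ B) 0) := by
  have key : ∀ (M N : Matrix ι ι R) (P Q : Matrix κ κ R), M * N = f • 1 → P * Q = g • 1 →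
      fromBlocks 0 (M ⊗ₖ P) (M ⊗ₖ P) 0 * fromBlocks 0 (N ⊗ₖ Q) (N ⊗ₖ Q) 0
        = (f * g) • 1 := by
    intro M N P Q hm hp
    rw [Matrix.fromBlocks_multiply]
    simp only [Matrix.zero_mul, Matrix.mul_zero, add_zero, zero_add,
      ← Matrix.mul_kronecker_mul, hm, hp, Matrix.smul_kronecker,
      Matrix.kronecker_smul, Matrix.one_kronecker_one, smul_smul]
    rw [← Matrix.fromBlocks_one, Matrix.fromBlocks_smul, smul_zero, mul_comm g f]
  exact ⟨key _ _ _ _ h1.1 h2.1, key _ _ _ _ h1.2 h2.2⟩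

/-- Associativity of the variant multiplicative tensor product `⊗̃′`: both iterated products
are matrix factorizations of `fgh` of size `4rpm` and `(X ⊗̃′ X′) ⊗̃′ X″ = X ⊗̃′ (X′ ⊗̃′ X″)`
after reindexing along the canonical bijection of index sets. -/
theorem mult_tensor_product_variant_assoc {R : Type*} [CommRing R] {r p m : ℕ} (f g h : R)
    (φ ψ : Matrix (Fin r) (Fin r) R) (φ' ψ' : Matrix (Fin p) (Fin p) R)
    (φ'' ψ'' : Matrix (Fin m) (Fin m) R)
    (hX : IsMatrixFactorization f φ ψ) (hX' : IsMatrixFactorization g φ' ψ')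
    (hX'' : IsMatrixFactorization h φ'' ψ'') :
    IsMatrixFactorization (f * g * h)
      (fromBlocks 0 ((fromBlocks 0 (φ ⊗ₖ φ') (φ ⊗ₖ φ') 0) ⊗ₖ φ'')
        ((fromBlocks 0 (φ ⊗ₖ φ') (φ ⊗ₖ φ') 0) ⊗ₖ φ'') 0)
      (fromBlocks 0 ((fromBlocks 0 (ψ ⊗ₖ ψ') (ψ ⊗ₖ ψ') 0) ⊗ₖ ψ'')
        ((fromBlocks 0 (ψ ⊗ₖ ψ') (ψ ⊗ₖ ψ') 0) ⊗ₖ ψ'') 0) ∧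
    IsMatrixFactorization (f * g * h)
      (fromBlocks 0 (φ ⊗ₖ (fromBlocks 0 (φ' ⊗ₖ φ'') (φ' ⊗ₖ φ'') 0))
        (φ ⊗ₖ (fromBlocks 0 (φ' ⊗ₖ φ'') (φ' ⊗ₖ φ'') 0)) 0)
      (fromBlocks 0 (ψ ⊗ₖ (fromBlocks 0 (ψ' ⊗ₖ ψ'') (ψ' ⊗ₖ ψ'') 0))
        (ψ ⊗ₖ (fromBlocks 0 (ψ' ⊗ₖ ψ'') (ψ' ⊗ₖ ψ'') 0)) 0) ∧
    (Matrix.reindex (assocIndexEquiv (Fin r) (Fin p) (Fin m))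
        (assocIndexEquiv (Fin r) (Fin p) (Fin m))
        (fromBlocks 0 ((fromBlocks 0 (φ ⊗ₖ φ') (φ ⊗ₖ φ') 0) ⊗ₖ φ'')
          ((fromBlocks 0 (φ ⊗ₖ φ') (φ ⊗ₖ φ') 0) ⊗ₖ φ'') 0) =
      fromBlocks 0 (φ ⊗ₖ (fromBlocks 0 (φ' ⊗ₖ φ'') (φ' ⊗ₖ φ'') 0))
        (φ ⊗ₖ (fromBlocks 0 (φ' ⊗ₖ φ'') (φ' ⊗ₖ φ'') 0)) 0) ∧
    (Matrix.reindex (assocIndexEquiv (Fin r) (Fin p) (Fin m))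
        (assocIndexEquiv (Fin r) (Fin p) (Fin m))
        (fromBlocks 0 ((fromBlocks 0 (ψ ⊗ₖ ψ') (ψ ⊗ₖ ψ') 0) ⊗ₖ ψ'')
          ((fromBlocks 0 (ψ ⊗ₖ ψ') (ψ ⊗ₖ ψ') 0) ⊗ₖ ψ'') 0) =
      fromBlocks 0 (ψ ⊗ₖ (fromBlocks 0 (ψ' ⊗ₖ ψ'') (ψ' ⊗ₖ ψ'') 0))
        (ψ ⊗ₖ (fromBlocks 0 (ψ' ⊗ₖ ψ'') (ψ' ⊗ₖ ψ'') 0)) 0) := by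

  have l1 := mfTensor (mfTensor hX hX') hX''
  have l2 := mfTensor hX (mfTensor hX' hX'')
  rw [← mul_assoc] at l2
  refine ⟨l1, l2, ?_, ?_⟩ <;>
  · ext i j
    rcases i with (⟨a,(⟨b,c⟩|⟨b,c⟩)⟩|⟨a,(⟨b,c⟩|⟨b,c⟩)⟩) <;>
      rcases j with (⟨a',(⟨b',c'⟩|⟨b',c'⟩)⟩|⟨a',(⟨b',c'⟩|⟨b',c'⟩)⟩) <;>
      simp [assocIndexEquiv, Matrix.fromBlocks, Matrix.kroneckerMap_apply, mul_assoc,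
        Equiv.sumProdDistrib, Equiv.prodSumDistrib, Matrix.submatrix_apply]
end

section
/- Let R be a commutative ring, f, g ∈ R, let X = (φ, ψ) be an r×r matrix factorization of f and X′ = (φ′, ψ′) a p×p matrix factorization of g. Then X ⊗̃ X′ and X′ ⊗̃ X are isomorphic matrix factorizations of fg: there exists a bijection e of the row/column index set (a permutation, induced by the perfect-shuffle swap of Kronecker factors applied in each diagonal block) such that reindexing both component matrices of X ⊗̃ X′ = ( [φ⊗φ′, 0; 0, φ⊗φ′], [ψ⊗ψ′, 0; 0, ψ⊗ψ′] ) along e yields the component matrices of X′ ⊗̃ X = ( [φ′⊗φ, 0; 0, φ′⊗φ], [ψ′⊗ψ, 0; 0, ψ′⊗ψ] ). -/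
open Matrix Kronecker

/-- Commutativity of the multiplicative tensor product: `X ⊗̃ X′ ≅ X′ ⊗̃ X` in `MF(fg)`,
witnessed by a bijection of index sets along which the component matrices correspond. -/
theorem mult_tensor_product_comm {R : Type*} [CommRing R] {r p : ℕ} (f g : R)
    (φ ψ : Matrix (Fin r) (Fin r) R) (φ' ψ' : Matrix (Fin p) (Fin p) R)
    (hX : IsMatrixFactorization f φ ψ) (hX' : IsMatrixFactorization g φ' ψ') :
    ∃ e : ((Fin r × Fin p) ⊕ (Fin r × Fin p)) ≃ ((Fin p × Fin r) ⊕ (Fin p × Fin r)),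
      Matrix.reindex e e (fromBlocks (φ ⊗ₖ φ') 0 0 (φ ⊗ₖ φ')) =
        fromBlocks (φ' ⊗ₖ φ) 0 0 (φ' ⊗ₖ φ) ∧
      Matrix.reindex e e (fromBlocks (ψ ⊗ₖ ψ') 0 0 (ψ ⊗ₖ ψ')) =
        fromBlocks (ψ' ⊗ₖ ψ) 0 0 (ψ' ⊗ₖ ψ) := by
  refine ⟨Equiv.sumCongr (Equiv.prodComm _ _) (Equiv.prodComm _ _), ?_, ?_⟩ <;>
    · ext (⟨i, j⟩ | ⟨i, j⟩) (⟨k, l⟩ | ⟨k, l⟩) <;>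
        simp [Matrix.reindex_apply, Matrix.fromBlocks, Matrix.kroneckerMap, mul_comm]
end

section
/- Let R be a commutative ring, f, g ∈ R, let X = (φ, ψ) be an r×r matrix factorization of f and X′ = (φ′, ψ′) a p×p matrix factorization of g. Then X ⊗̃′ X′ and X′ ⊗̃′ X are isomorphic matrix factorizations of fg: there exists a bijection e of the index set such that reindexing both component matrices of X ⊗̃′ X′ = ( [0, φ⊗φ′; φ⊗φ′, 0], [0, ψ⊗ψ′; ψ⊗ψ′, 0] ) along e yields the component matrices of X′ ⊗̃′ X = ( [0, φ′⊗φ; φ′⊗φ, 0], [0, ψ′⊗ψ; ψ′⊗ψ, 0] ). -/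
open Matrix Kronecker

/-- Commutativity of the variant multiplicative tensor product: `X ⊗̃′ X′ ≅ X′ ⊗̃′ X` in
`MF(fg)`, witnessed by a bijection of index sets along which the component matrices
correspond. -/
theorem mult_tensor_product_variant_comm {R : Type*} [CommRing R] {r p : ℕ} (f g : R)
    (φ ψ : Matrix (Fin r) (Fin r) R) (φ' ψ' : Matrix (Fin p) (Fin p) R)
    (hX : IsMatrixFactorization f φ ψ) (hX' : IsMatrixFactorization g φ' ψ') :
    ∃ e : ((Fin r × Fin p) ⊕ (Fin r × Fin p)) ≃ ((Fin p × Fin r) ⊕ (Fin p × Fin r)),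
      Matrix.reindex e e (fromBlocks 0 (φ ⊗ₖ φ') (φ ⊗ₖ φ') 0) =
        fromBlocks 0 (φ' ⊗ₖ φ) (φ' ⊗ₖ φ) 0 ∧
      Matrix.reindex e e (fromBlocks 0 (ψ ⊗ₖ ψ') (ψ ⊗ₖ ψ') 0) =
        fromBlocks 0 (ψ' ⊗ₖ ψ) (ψ' ⊗ₖ ψ) 0 := by
  refine ⟨Equiv.sumCongr (Equiv.prodComm _ _) (Equiv.prodComm _ _), ?_, ?_⟩ <;>
  · ext i j
    cases i <;> cases j <;>
      simp [Matrix.fromBlocks, Matrix.kroneckerMap, mul_comm]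
end

section
/- Let R be a commutative ring, let (C, D) be an n×n matrix factorization of f ∈ R, and let g, h ∈ R. Then the pair of 2n×2n block matrices ( [C, −g·Iₙ; h·Iₙ, D], [D, g·Iₙ; −h·Iₙ, C] ) is a matrix factorization of f + gh; that is, their product in either order equals (f+gh)·I_{2n}. -/
open Matrix

/-- If `(C, D)` is an `n×n` matrix factorization of `f` and `g, h ∈ R`, then
`([C, −g·Iₙ; h·Iₙ, D], [D, g·Iₙ; −h·Iₙ, C])` is a `2n×2n` matrix factorization of
`f + gh`. -/
theorem standard_method_corollary {R : Type*} [CommRing R] {n : ℕ} (f g h : R)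
    (C D : Matrix (Fin n) (Fin n) R) (hCD : IsMatrixFactorization f C D) :
    IsMatrixFactorization (f + g * h)
      (fromBlocks C (-(g • (1 : Matrix (Fin n) (Fin n) R)))
        (h • (1 : Matrix (Fin n) (Fin n) R)) D)
      (fromBlocks D (g • (1 : Matrix (Fin n) (Fin n) R))
        (-(h • (1 : Matrix (Fin n) (Fin n) R))) C) := by
  obtain ⟨h1, h2⟩ := hCD
  constructor <;>
  · rw [fromBlocks_multiply, ← fromBlocks_one, fromBlocks_smul]
    simp [h1, h2, Matrix.mul_smul, Matrix.smul_mul, smul_smul, add_smul, mul_comm, add_comm]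
end

section
/- (Standard method.) Let R be a commutative ring, let k ≥ 1, and let g₁, …, g_k, h₁, …, h_k ∈ R. Then the element f = g₁h₁ + g₂h₂ + ⋯ + g_k h_k admits a matrix factorization of size 2^{k−1}: there exist 2^{k−1} × 2^{k−1} matrices φ, ψ over R with φψ = ψφ = f·I_{2^{k−1}}. -/
open Matrix

lemma IsMatrixFactorization.step {R : Type*} [CommRing R] {ι : Type*} [Fintype ι]
    [DecidableEq ι] {f : R} {φ ψ : Matrix ι ι R} (hf : IsMatrixFactorization f φ ψ)
    (g h : R) :
    IsMatrixFactorization (f + g * h)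
      (Matrix.fromBlocks φ (g • 1) (h • 1) (-ψ))
      (Matrix.fromBlocks ψ (g • 1) (h • 1) (-φ)) := by
  obtain ⟨h1, h2⟩ := hf
  have key : (f + h * g) • (1 : Matrix (ι ⊕ ι) (ι ⊕ ι) R) =
      Matrix.fromBlocks ((f + h * g) • 1) 0 0 ((f + h * g) • 1) := by
    rw [← Matrix.fromBlocks_one, Matrix.fromBlocks_smul, smul_zero]
  constructor <;>
  · rw [Matrix.fromBlocks_multiply]
    simp only [Matrix.mul_smul, Matrix.smul_mul, Matrix.mul_one, Matrix.one_mul, h1, h2,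
      Matrix.mul_neg, Matrix.neg_mul, smul_smul, smul_neg, neg_neg, mul_comm g h,
      add_neg_cancel]
    rw [key, add_comm ((h * g) • (1 : Matrix ι ι R)) (f • 1), ← add_smul]

lemma IsMatrixFactorization.reindex {R : Type*} [CommRing R] {ι κ : Type*} [Fintype ι]
    [DecidableEq ι] [Fintype κ] [DecidableEq κ] (e : ι ≃ κ) {f : R} {φ ψ : Matrix ι ι R}
    (hf : IsMatrixFactorization f φ ψ) :
    IsMatrixFactorization f (Matrix.reindex e e φ) (Matrix.reindex e e ψ) := by
  obtain ⟨h1, h2⟩ := hf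
  constructor
  · rw [Matrix.reindex_apply, Matrix.reindex_apply, Matrix.submatrix_mul_equiv, h1]
    simp [Matrix.submatrix_smul, Matrix.submatrix_one_equiv]
  · rw [Matrix.reindex_apply, Matrix.reindex_apply, Matrix.submatrix_mul_equiv, h2]
    simp [Matrix.submatrix_smul, Matrix.submatrix_one_equiv]

lemma standard_method_aux {R : Type*} [CommRing R] (m : ℕ) (g h : Fin (m + 1) → R) :
    ∃ φ ψ : Matrix (Fin (2 ^ m)) (Fin (2 ^ m)) R,
      IsMatrixFactorization (∑ i, g i * h i) φ ψ := by
  induction m with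
  | zero =>
    refine ⟨g 0 • 1, h 0 • 1, ?_, ?_⟩ <;>
    · simp [smul_smul, Fin.sum_univ_one, mul_comm]
  | succ n ih =>
    obtain ⟨φ, ψ, hf⟩ := ih (fun i => g i.castSucc) (fun i => h i.castSucc)
    have hstep := (hf.step (g (Fin.last _)) (h (Fin.last _))).reindex
      (finSumFinEquiv.trans (finCongr (show 2 ^ n + 2 ^ n = 2 ^ (n + 1) by ring)))
    rw [Fin.sum_univ_castSucc]
    exact ⟨_, _, hstep⟩

/-- The standard method: every sum `f = g₁h₁ + ⋯ + g_k h_k` of `k ≥ 1` products in a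
commutative ring admits a matrix factorization of size `2^(k-1)`. -/
theorem standard_method {R : Type*} [CommRing R] {k : ℕ} (hk : 1 ≤ k) (g h : Fin k → R) :
    ∃ φ ψ : Matrix (Fin (2 ^ (k - 1))) (Fin (2 ^ (k - 1))) R,
      IsMatrixFactorization (∑ i, g i * h i) φ ψ := by
  cases k with
  | zero => omega
  | succ m => exact standard_method_aux m g h
end
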